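/- arXiv:math/0512432 — 6 statements merged into one kernel-verified Lean document; each statement's English description precedes it below -/
import Mathlib

section
/- For α ∈ ℝ \ ℕ and ρ ∈ (0,∞), the n-th coefficient of (ρ - z)^α equals (-1)^n · binom(α, n) · ρ^(α-n), and this is asymptotically equivalent, as n → ∞, to (ρ^α / Γ(-α)) · ρ^{-n} · n^{-α-1}. -/
/-!
Factoring `(ρ - z)^α = ρ^α (1 - z/ρ)^α` reduces the expansion to Newton's binomial series.
For the asymptotics, with `s = -α`, the coefficient `(-1)^n binom(α, n)` is the rising product
`s (s + 1) ⋯ (s + n - 1) / n!`, which is exactly `n^s / ((s + n) Γₙ(s))` for Euler's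
approximants `Γₙ(s) = n^s n! / (s (s + 1) ⋯ (s + n))`; since `Γₙ(s) → Γ(s) ≠ 0`, it behaves
like `n^(s - 1) / Γ(s)`.
-/

open Filter Asymptotics Finset
open scoped Nat

theorem Ring.choose_eq_prod_range_div_factorial {K : Type*} [Field K] [CharZero K] (a : K)
    (n : ℕ) : Ring.choose a n = (∏ j ∈ range n, (a - j)) / n ! := by
  rw [Ring.choose_eq_smul, ← Polynomial.aeval_eq_smeval, Polynomial.aeval_def,
    Polynomial.eval₂_eq_eval_map, descPochhammer_map, descPochhammer_eval_eq_prod_range,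
    smul_eq_mul, inv_mul_eq_div]

theorem Ring.neg_one_pow_mul_choose {K : Type*} [Field K] [CharZero K] (a : K) (n : ℕ) :
    (-1) ^ n * Ring.choose a n = (∏ j ∈ range n, (-a + j)) / n ! := by
  have hprod : ∏ j ∈ range n, (-a + j) = (-1) ^ n * ∏ j ∈ range n, (a - j) :=
    calc ∏ j ∈ range n, (-a + j) = ∏ j ∈ range n, -(a - j) := prod_congr rfl fun j _ => by ring
      _ = (-1) ^ n * ∏ j ∈ range n, (a - j) := by rw [prod_neg, card_range]
  rw [Ring.choose_eq_prod_range_div_factorial, hprod, mul_div_assoc]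

namespace Real

theorem hasSum_rpow_sub (a : ℝ) {ρ z : ℝ} (hρ : 0 < ρ) (hz : |z| < ρ) :
    HasSum (fun n : ℕ => (-1) ^ n * Ring.choose a n * ρ ^ (a - n) * z ^ n) ((ρ - z) ^ a) := by
  set x := -z / ρ
  have hx : |x| < 1 := by rwa [abs_div, abs_neg, abs_of_pos hρ, div_lt_one hρ]
  have hsum := one_add_rpow_hasFPowerSeriesOnBall_zero (a := a).hasSum (y := x)
    (by simpa [← ofReal_norm] using hx)
  simp only [zero_add, binomialSeries, FormalMultilinearSeries.ofScalars_apply_eq,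
    smul_eq_mul] at hsum
  have hsplit : ρ - z = ρ * (1 + x) := by simp only [x]; field_simp; ring
  rw [hsplit, mul_rpow hρ.le (by linarith [(abs_lt.mp hx).1])]
  refine (hsum.mul_left (ρ ^ a)).congr_fun fun n => ?_
  rw [rpow_sub hρ, rpow_natCast, div_pow, neg_pow z n]
  field_simp

theorem prod_range_add_div_factorial_eq_GammaSeq {s : ℝ} (hs : ∀ m : ℕ, s + m ≠ 0) {n : ℕ}
    (hn : n ≠ 0) : (∏ j ∈ range n, (s + j)) / n ! = n ^ s / (GammaSeq s n * (s + n)) := by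
  have hprod : ∏ j ∈ range n, (s + j) ≠ 0 := prod_ne_zero_iff.mpr fun j _ => hs j
  have hpow : (n : ℝ) ^ s ≠ 0 := (rpow_pos_of_pos (by positivity) s).ne'
  rw [GammaSeq, prod_range_succ]
  field_simp [hs n]

theorem isEquivalent_prod_range_add_div_factorial {s : ℝ} (hs : ∀ m : ℕ, s + m ≠ 0) :
    (fun n : ℕ => (∏ j ∈ range n, (s + j)) / n !) ~[atTop]
      fun n => (n : ℝ) ^ (s - 1) / Gamma s := by
  have hΓ : Gamma s ≠ 0 := Gamma_ne_zero fun m hm => hs m (by linarith)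
  have hGammaSeq : GammaSeq s ~[atTop] fun _ => Gamma s :=
    (isEquivalent_const_iff_tendsto hΓ).2 (GammaSeq_tendsto_Gamma s)
  have hshift : (fun n : ℕ => s + n) ~[atTop] fun n => (n : ℝ) := by
    have hs_small : (fun _ : ℕ => s) =o[atTop] fun n => (n : ℝ) :=
      isLittleO_const_left.2 <| .inr <| tendsto_norm_atTop_atTop.comp tendsto_natCast_atTop_atTop
    exact (IsEquivalent.refl.add_isLittleO hs_small).congr_left (.of_forall fun n => add_comm _ _)
  have hquotient := (IsEquivalent.refl (u := fun n : ℕ => (n : ℝ) ^ s)).div (hGammaSeq.mul hshift)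
  refine (hquotient.congr_left ?_).congr_right ?_
  · filter_upwards [eventually_ne_atTop 0] with n hn
    exact (prod_range_add_div_factorial_eq_GammaSeq hs hn).symm
  · filter_upwards [eventually_ne_atTop 0] with n hn
    simp only [Pi.div_apply, Pi.mul_apply]
    rw [rpow_sub_one (by positivity)]
    ring

theorem isEquivalent_neg_one_pow_mul_choose {a : ℝ} (ha : ∀ n : ℕ, a ≠ n) :
    (fun n : ℕ => (-1) ^ n * Ring.choose a n) ~[atTop]
      fun n => (n : ℝ) ^ (-a - 1) / Gamma (-a) := by
  simp only [Ring.neg_one_pow_mul_choose]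
  exact isEquivalent_prod_range_add_div_factorial fun m hm => ha m (by linarith)

end Real

/-- binomial coefficient asymptotics for `(ρ - z)^α`. -/
theorem stmt_1 (α : ℝ) (hα : ∀ n : ℕ, α ≠ (n : ℝ)) (ρ : ℝ) (hρ : 0 < ρ)
    (c : ℕ → ℝ)
    (hc : ∀ n, c n = (-1) ^ n *
        ((∏ i ∈ Finset.range n, (α - (i : ℝ))) / (Nat.factorial n)) * ρ ^ (α - (n : ℝ))) :
    (∀ z : ℝ, |z| < ρ → (ρ - z) ^ α = ∑' n, c n * z ^ n) ∧
      Tendsto (fun n : ℕ =>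
          c n / ((ρ ^ α / Real.Gamma (-α)) * ρ ^ (-(n : ℝ)) * (n : ℝ) ^ (-α - 1)))
        atTop (nhds 1) := by
  have hc_choose : c = fun n => (-1) ^ n * Ring.choose α n * ρ ^ (α - n) := by
    funext n
    rw [hc, Ring.choose_eq_prod_range_div_factorial]
  refine ⟨fun z hz => ?_, ?_⟩
  · rw [hc_choose]
    exact (Real.hasSum_rpow_sub α hρ hz).tsum_eq.symm
  · have hΓ : Real.Gamma (-α) ≠ 0 := Real.Gamma_ne_zero fun m hm => hα m (by linarith)
    have hequiv : c ~[atTop]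
        fun n : ℕ => (ρ ^ α / Real.Gamma (-α)) * ρ ^ (-(n : ℝ)) * (n : ℝ) ^ (-α - 1) := by
      rw [hc_choose]
      refine ((Real.isEquivalent_neg_one_pow_mul_choose hα).mul IsEquivalent.refl).congr_right
        (.of_forall fun n => ?_)
      simp only [Pi.mul_apply]
      rw [sub_eq_add_neg α, Real.rpow_add hρ]
      ring
    refine (isEquivalent_iff_tendsto_one ?_).1 hequiv
    filter_upwards [eventually_ne_atTop 0] with n hn
    have hn' : (0 : ℝ) < n := by positivity
    positivity
end

section
/- Let T be a power series with nonnegative coefficients, zero constant term, radius of convergence ρ ∈ (0,∞), and shift periodic form T(z) = z^d V(z^q) with ω := e^{2πi/q}. Then T(ωz) = ω^d T(z) for all |z| < ρ, and consequently every point z₀ with z₀^q = ρ^q is a singularity of T (i.e., T has no analytic continuation to any neighborhood of z₀). -/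
/-!
Every exponent `n` with `t n ≠ 0` lies in `d + q ℕ`, so `(u z) ^ n = u ^ d z ^ n` whenever
`u ^ q = 1`. This gives the rotation identity, and it moves an analytic continuation at
`z₀ = u ρ` to one at `ρ`. That `ρ` itself is singular is Pringsheim's theorem: a continuation near
`ρ` would make the re-expansion of `T` at a real point `x < ρ` close to `ρ` converge beyond
`ρ - x`. Its coefficients `∑ₙ C(k + n, k) t (k + n) x ^ n` are nonnegative, so the double series
can be rearranged freely, and `∑ t m (x + s) ^ m` would converge for some `x + s > ρ`.
-/

open Finset Metric FormalMultilinearSeries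
open scoped ENNReal NNReal

namespace Pringsheim

section Recentering

variable {𝕜 : Type*}

def taylorTerm [CommSemiring 𝕜] (a : ℕ → 𝕜) (x : 𝕜) (k n : ℕ) : 𝕜 :=
  ((k + n).choose k : 𝕜) * a (k + n) * x ^ n

/-- The `k`-th coefficient of `∑ a m * z ^ m` re-expanded around `x`. -/
noncomputable def taylorCoeff [CommSemiring 𝕜] [TopologicalSpace 𝕜] (a : ℕ → 𝕜) (x : 𝕜)
    (k : ℕ) : 𝕜 :=
  ∑' n, taylorTerm a x k n

theorem sum_antidiagonal_taylorTerm [CommSemiring 𝕜] (a : ℕ → 𝕜) (x y : 𝕜) (m : ℕ) :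
    ∑ p ∈ antidiagonal m, taylorTerm a x p.1 p.2 * y ^ p.1 = a m * (x + y) ^ m := by
  rw [add_comm x y, (Commute.all y x).add_pow' m, Finset.mul_sum]
  refine Finset.sum_congr rfl fun p hp => ?_
  rw [HasAntidiagonal.mem_antidiagonal] at hp
  subst hp
  simp only [taylorTerm, nsmul_eq_mul]
  ring

theorem _root_.HasSum.sum_antidiagonal {α : Type*} [AddCommMonoid α] [TopologicalSpace α]
    [ContinuousAdd α] [RegularSpace α] {F : ℕ × ℕ → α} {s : α} (h : HasSum F s) :
    HasSum (fun m => ∑ p ∈ antidiagonal m, F p) s :=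
  (HasAntidiagonal.sigmaAntidiagonalEquivProd.hasSum_iff.2 h).sigma fun m =>
    (antidiagonal m).hasSum F

theorem summable_iff_summable_sum_antidiagonal_of_nonneg {F : ℕ × ℕ → ℝ} (hF : 0 ≤ F) :
    Summable F ↔ Summable fun m => ∑ p ∈ antidiagonal m, F p := by
  refine (HasAntidiagonal.sigmaAntidiagonalEquivProd.summable_iff (f := F)).symm.trans ?_
  refine (summable_sigma_of_nonneg fun _ => hF _).trans ?_
  simp [Summable.of_finite, tsum_fintype, Finset.sum_attach]

theorem hasSum_taylorCoeff_mul_pow [NormedField 𝕜] [CompleteSpace 𝕜] {a : ℕ → 𝕜} {x y : 𝕜}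
    (h : Summable fun p : ℕ × ℕ => taylorTerm a x p.1 p.2 * y ^ p.1) :
    HasSum (fun k => taylorCoeff a x k * y ^ k) (∑' m, a m * (x + y) ^ m) := by
  have hdiag : HasSum (fun m => a m * (x + y) ^ m)
      (∑' p : ℕ × ℕ, taylorTerm a x p.1 p.2 * y ^ p.1) := by
    simpa only [sum_antidiagonal_taylorTerm] using h.hasSum.sum_antidiagonal
  rw [hdiag.tsum_eq]
  refine h.hasSum.prod_fiberwise fun k => ?_
  simpa only [taylorCoeff, tsum_mul_right] using (h.prod_factor k).hasSum

theorem norm_taylorTerm [RCLike 𝕜] (a : ℕ → 𝕜) (x : 𝕜) (k n : ℕ) :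
    ‖taylorTerm a x k n‖ = taylorTerm (fun m => ‖a m‖) ‖x‖ k n := by
  simp [taylorTerm, norm_mul, norm_pow]

end Recentering

section Nonneg

variable {t : ℕ → ℝ} {x y ρ : ℝ}

theorem taylorTerm_nonneg (ht : ∀ n, 0 ≤ t n) (hx : 0 ≤ x) (k n : ℕ) :
    0 ≤ taylorTerm t x k n := by
  have := ht (k + n)
  unfold taylorTerm
  positivity

theorem taylorCoeff_nonneg (ht : ∀ n, 0 ≤ t n) (hx : 0 ≤ x) (k : ℕ) : 0 ≤ taylorCoeff t x k :=
  tsum_nonneg (taylorTerm_nonneg ht hx k)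

theorem summable_taylorTerm_iff (ht : ∀ n, 0 ≤ t n) (hx : 0 ≤ x) (hy : 0 ≤ y) :
    (Summable fun p : ℕ × ℕ => taylorTerm t x p.1 p.2 * y ^ p.1) ↔
      Summable fun m => t m * (x + y) ^ m := by
  rw [summable_iff_summable_sum_antidiagonal_of_nonneg fun p =>
    mul_nonneg (taylorTerm_nonneg ht hx _ _) (pow_nonneg hy _)]
  simp only [sum_antidiagonal_taylorTerm]

theorem summable_taylorTerm (ht : ∀ n, 0 ≤ t n)
    (hconv : ∀ r, 0 ≤ r → r < ρ → Summable fun n => t n * r ^ n) (hx : 0 ≤ x) (hxρ : x < ρ)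
    (k : ℕ) : Summable (taylorTerm t x k) := by
  have hy : 0 < (ρ - x) / 2 := by linarith
  have h := ((summable_taylorTerm_iff ht hx hy.le).2
    (hconv _ (by linarith) (by linarith))).prod_factor k
  exact (summable_mul_right_iff (pow_ne_zero k hy.ne')).1 h

theorem summable_taylorCoeff_mul_pow_iff (ht : ∀ n, 0 ≤ t n)
    (hconv : ∀ r, 0 ≤ r → r < ρ → Summable fun n => t n * r ^ n) (hx : 0 ≤ x) (hxρ : x < ρ)
    (hy : 0 ≤ y) :
    (Summable fun k => taylorCoeff t x k * y ^ k) ↔ Summable fun m => t m * (x + y) ^ m := by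
  rw [← summable_taylorTerm_iff ht hx hy]
  refine ⟨fun h => ?_, fun h => (hasSum_taylorCoeff_mul_pow h).summable⟩
  have hnn : 0 ≤ fun p : ℕ × ℕ => taylorTerm t x p.1 p.2 * y ^ p.1 := fun p =>
    mul_nonneg (taylorTerm_nonneg ht hx _ _) (pow_nonneg hy _)
  refine (summable_prod_of_nonneg hnn).2 ⟨fun k => ?_, ?_⟩
  · exact (summable_taylorTerm ht hconv hx hxρ k).mul_right (y ^ k)
  · simp only [tsum_mul_right]
    exact h

theorem norm_taylorCoeff_ofReal (ht : ∀ n, 0 ≤ t n) (hx : 0 ≤ x) (k : ℕ) :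
    ‖taylorCoeff (fun n => (t n : ℂ)) (x : ℂ) k‖ = taylorCoeff t x k := by
  have hcast : taylorCoeff (fun n => (t n : ℂ)) (x : ℂ) k = ((taylorCoeff t x k : ℝ) : ℂ) := by
    simp only [taylorCoeff, taylorTerm, Complex.ofReal_tsum]
    push_cast
    rfl
  rw [hcast, Complex.norm_real, Real.norm_of_nonneg (taylorCoeff_nonneg ht hx k)]

end Nonneg

section Expansion

variable {𝕜 : Type*} [RCLike 𝕜] {a : ℕ → 𝕜} {ρ : ℝ}

theorem norm_taylorCoeff_le {x : 𝕜} {k : ℕ}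
    (h : Summable (taylorTerm (fun m => ‖a m‖) ‖x‖ k)) :
    ‖taylorCoeff a x k‖ ≤ taylorCoeff (fun m => ‖a m‖) ‖x‖ k := by
  have h' : Summable fun n => ‖taylorTerm a x k n‖ := by simpa only [norm_taylorTerm] using h
  exact (norm_tsum_le_tsum_norm h').trans_eq (tsum_congr fun n => norm_taylorTerm a x k n)

theorem hasFPowerSeriesOnBall_taylorCoeff
    (hconv : ∀ r, 0 ≤ r → r < ρ → Summable fun n => ‖a n‖ * r ^ n) {x : 𝕜} (hx : ‖x‖ < ρ) :
    HasFPowerSeriesOnBall (fun z => ∑' n, a n * z ^ n) (ofScalars 𝕜 (taylorCoeff a x)) x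
      (ENNReal.ofReal (ρ - ‖x‖)) where
  r_le := by
    refine ENNReal.le_of_forall_nnreal_lt fun r hr => le_radius_of_summable _ ?_
    have hr' : ‖x‖ + r < ρ := by
      rw [← ENNReal.ofReal_coe_nnreal, ENNReal.ofReal_lt_ofReal_iff (by linarith)] at hr
      linarith
    have hnorm : ∀ n, 0 ≤ ‖a n‖ := fun n => norm_nonneg _
    have hsum := (summable_taylorCoeff_mul_pow_iff hnorm hconv (norm_nonneg x) (by linarith)
      r.2).2 (hconv _ (add_nonneg (norm_nonneg x) r.2) hr')
    refine hsum.of_nonneg_of_le (fun k => by positivity) fun k => ?_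
    rw [ofScalars_norm]
    exact mul_le_mul_of_nonneg_right (norm_taylorCoeff_le
      (summable_taylorTerm hnorm hconv (norm_nonneg x) (by linarith) k)) (by positivity)
  r_pos := ENNReal.ofReal_pos.2 (by linarith)
  hasSum := fun {y} hy => by
    rw [Metric.mem_eball, edist_zero_right, ← ofReal_norm,
      ENNReal.ofReal_lt_ofReal_iff (by linarith)] at hy
    simp only [ofScalars_apply_eq, smul_eq_mul]
    refine hasSum_taylorCoeff_mul_pow (Summable.of_norm ?_)
    simp only [norm_mul, norm_pow, norm_taylorTerm]
    exact (summable_taylorTerm_iff (fun n => norm_nonneg _) (norm_nonneg x) (norm_nonneg y)).2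
      (hconv _ (by positivity) (by linarith))

end Expansion

theorem tsum_mul_mul_pow_eq_pow_mul_tsum {𝕜 : Type*} [NormedField 𝕜] {a : ℕ → 𝕜} {d q : ℕ}
    (ha : ∀ n, a n ≠ 0 → ∃ k, n = d + q * k) {u : 𝕜} (hu : u ^ q = 1) (z : 𝕜) :
    ∑' n, a n * (u * z) ^ n = u ^ d * ∑' n, a n * z ^ n := by
  rw [← tsum_mul_left]
  refine tsum_congr fun n => ?_
  obtain h | h := eq_or_ne (a n) 0
  · simp [h]
  · obtain ⟨k, rfl⟩ := ha n h
    rw [mul_pow, pow_add u, pow_mul, hu, one_pow, mul_one]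
    ring

theorem _root_.AnalyticOnNhd.piecewise {𝕜 E : Type*} [NontriviallyNormedField 𝕜]
    [NormedAddCommGroup E] [NormedSpace 𝕜 E] {U V : Set 𝕜} [DecidablePred (· ∈ U)]
    (hU : IsOpen U) (hV : IsOpen V) {f g : 𝕜 → E} (hf : AnalyticOnNhd 𝕜 f U)
    (hg : AnalyticOnNhd 𝕜 g V) (hfg : Set.EqOn f g (U ∩ V)) :
    AnalyticOnNhd 𝕜 (U.piecewise f g) (U ∪ V) := by
  rintro z (hz | hz)
  · refine (hf z hz).congr ?_
    filter_upwards [hU.mem_nhds hz] with w hw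
    rw [Set.piecewise_eq_of_mem _ _ _ hw]
  · refine (hg z hz).congr ?_
    filter_upwards [hV.mem_nhds hz] with w hw
    by_cases hwU : w ∈ U
    · rw [Set.piecewise_eq_of_mem _ _ _ hwU, hfg ⟨hwU, hw⟩]
    · rw [Set.piecewise_eq_of_notMem _ _ _ hwU]

theorem _root_.HasFPowerSeriesAt.le_radius_of_differentiableOn {E : Type*}
    [NormedAddCommGroup E] [NormedSpace ℂ E] [CompleteSpace E] {g : ℂ → E}
    {p : FormalMultilinearSeries ℂ ℂ E} {x : ℂ} {R : ℝ} (hp : HasFPowerSeriesAt g p x)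
    (hg : DifferentiableOn ℂ g (closedBall x R)) (hR : 0 < R) :
    ENNReal.ofReal R ≤ p.radius := by
  lift R to ℝ≥0 using hR.le
  rw [ENNReal.ofReal_coe_nnreal]
  have hcauchy := hg.hasFPowerSeriesOnBall hR
  rw [hp.eq_formalMultilinearSeries hcauchy.hasFPowerSeriesAt]
  exact hcauchy.r_le

theorem le_radius_taylorCoeff_of_continuation {a : ℕ → ℂ} {ρ : ℝ}
    (hconv : ∀ r, 0 ≤ r → r < ρ → Summable fun n => ‖a n‖ * r ^ n) {f : ℂ → ℂ} {z₀ : ℂ}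
    {ε : ℝ} (hfa : ∀ z ∈ ball z₀ ε, AnalyticAt ℂ f z)
    (hfe : ∀ z ∈ ball z₀ ε, ‖z‖ < ρ → f z = ∑' n, a n * z ^ n) {x : ℂ} (hx : ‖x‖ < ρ)
    {R : ℝ} (hR : 0 < R) (hsub : closedBall x R ⊆ ball 0 ρ ∪ ball z₀ ε) :
    ENNReal.ofReal R ≤ (ofScalars ℂ (taylorCoeff a x)).radius := by
  classical
  set T : ℂ → ℂ := fun z => ∑' n, a n * z ^ n
  have hT : AnalyticOnNhd ℂ T (ball 0 ρ) := fun z hz =>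
    (hasFPowerSeriesOnBall_taylorCoeff hconv (mem_ball_zero_iff.1 hz)).analyticAt
  have hglue : AnalyticOnNhd ℂ ((ball 0 ρ).piecewise T f) (ball 0 ρ ∪ ball z₀ ε) :=
    hT.piecewise isOpen_ball isOpen_ball hfa fun z hz =>
      (hfe z hz.2 (mem_ball_zero_iff.1 hz.1)).symm
  refine HasFPowerSeriesAt.le_radius_of_differentiableOn ?_ (hglue.differentiableOn.mono hsub) hR
  refine (hasFPowerSeriesOnBall_taylorCoeff hconv hx).hasFPowerSeriesAt.congr ?_
  filter_upwards [isOpen_ball.mem_nhds (mem_ball_zero_iff.2 hx)] with w hw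
  exact (Set.piecewise_eq_of_mem (ball 0 ρ) T f hw).symm

def HasAnalyticContinuationAt (F : ℂ → ℂ) (ρ : ℝ) (z₀ : ℂ) : Prop :=
  ∃ (f : ℂ → ℂ) (ε : ℝ), 0 < ε ∧ (∀ z ∈ ball z₀ ε, AnalyticAt ℂ f z) ∧
    ∀ z ∈ ball z₀ ε, ‖z‖ < ρ → f z = F z

theorem HasAnalyticContinuationAt.of_mul {F : ℂ → ℂ} {ρ : ℝ} {u c z₀ : ℂ} (hu : ‖u‖ = 1)
    (hc : c ≠ 0) (hF : ∀ z, ‖z‖ < ρ → F (u * z) = c * F z)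
    (h : HasAnalyticContinuationAt F ρ (u * z₀)) : HasAnalyticContinuationAt F ρ z₀ := by
  obtain ⟨f, ε, hε, hfa, hfe⟩ := h
  have hmem : ∀ z ∈ ball z₀ ε, u * z ∈ ball (u * z₀) ε := fun z hz => by
    rw [mem_ball_iff_norm, ← mul_sub, norm_mul, hu, one_mul]
    exact mem_ball_iff_norm.1 hz
  refine ⟨fun z => c⁻¹ * f (u * z), ε, hε, fun z hz => ?_, fun z hz hzρ => ?_⟩
  · exact analyticAt_const.mul ((hfa _ (hmem z hz)).comp (analyticAt_const.mul analyticAt_id))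
  · dsimp only
    rw [hfe _ (hmem z hz) (by rwa [norm_mul, hu, one_mul]), hF z hzρ, inv_mul_cancel_left₀ hc]

theorem not_hasAnalyticContinuationAt_radius {t : ℕ → ℝ} (ht : ∀ n, 0 ≤ t n) {ρ : ℝ}
    (hρ : 0 < ρ) (hconv : ∀ r, 0 ≤ r → r < ρ → Summable fun n => t n * r ^ n)
    (hdiv : ∀ r, ρ < r → ¬ Summable fun n => t n * r ^ n) :
    ¬ HasAnalyticContinuationAt (fun z => ∑' n, (t n : ℂ) * z ^ n) ρ ρ := by
  rintro ⟨f, ε, hε, hfa, hfe⟩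
  have hconvC : ∀ r, 0 ≤ r → r < ρ → Summable fun n => ‖(t n : ℂ)‖ * r ^ n := by
    simpa only [Complex.norm_real, Real.norm_of_nonneg (ht _)] using hconv
  -- Re-expand at `x = ρ - δ`: the disc of radius `2δ` about `x` stays inside `ball ρ ε`,
  -- while `x + 3δ/2 > ρ`.
  set δ := min ε ρ / 4 with hδ_def
  have hδ : 0 < δ := by positivity
  have hδρ : 4 * δ ≤ ρ := by linarith [min_le_right ε ρ]
  have hδε : 4 * δ ≤ ε := by linarith [min_le_left ε ρ]
  set x := ρ - δ
  have hx : ‖(x : ℂ)‖ < ρ := by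
    rw [Complex.norm_real, Real.norm_of_nonneg (by linarith)]
    linarith
  have hsub : closedBall (x : ℂ) (2 * δ) ⊆ ball 0 ρ ∪ ball (ρ : ℂ) ε := fun z hz => by
    right
    rw [mem_closedBall_iff_norm] at hz
    rw [mem_ball_iff_norm]
    calc ‖z - ρ‖ ≤ ‖z - x‖ + ‖(x : ℂ) - ρ‖ := norm_sub_le_norm_sub_add_norm_sub _ _ _
      _ = ‖z - x‖ + δ := by
        rw [← Complex.ofReal_sub, Complex.norm_real, Real.norm_of_nonpos (by linarith)]
        ring
      _ < ε := by linarith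
  have hR := le_radius_taylorCoeff_of_continuation hconvC hfa hfe hx (by linarith) hsub
  have hs : (((3 * δ / 2).toNNReal : ℝ≥0) : ℝ≥0∞) < _ :=
    ((ENNReal.ofReal_lt_ofReal_iff (by linarith)).2 (by linarith)).trans_le hR
  have hsum := summable_norm_mul_pow _ hs
  simp only [ofScalars_norm, norm_taylorCoeff_ofReal ht (by linarith : 0 ≤ x),
    Real.coe_toNNReal _ (by positivity : 0 ≤ 3 * δ / 2)] at hsum
  exact hdiv (x + 3 * δ / 2) (by linarith)
    ((summable_taylorCoeff_mul_pow_iff ht hconv (by linarith) (by linarith) (by positivity)).1 hsum)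

end Pringsheim

theorem stmt_3_general (t : ℕ → ℝ) (hnn : ∀ n, 0 ≤ t n)
    (ρ : ℝ) (hρ : 0 < ρ)
    (hconv : ∀ r : ℝ, 0 ≤ r → r < ρ → Summable fun n => t n * r ^ n)
    (hdiv : ∀ r : ℝ, ρ < r → ¬ Summable fun n => t n * r ^ n)
    (d q : ℕ) (hq : 1 ≤ q) (v : ℕ → ℝ)
    (hform : ∀ n, t n = if d ≤ n ∧ q ∣ (n - d) then v ((n - d) / q) else 0)
    (ω : ℂ) (hω : ω = Complex.exp (2 * Real.pi * Complex.I / q)) :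
    (∀ z : ℂ, ‖z‖ < ρ →
        ∑' n, (t n : ℂ) * (ω * z) ^ n = ω ^ d * ∑' n, (t n : ℂ) * z ^ n) ∧
      ∀ z₀ : ℂ, z₀ ^ q = (ρ : ℂ) ^ q →
        ¬ ∃ (f : ℂ → ℂ) (ε : ℝ), 0 < ε ∧
            (∀ z ∈ Metric.ball z₀ ε, AnalyticAt ℂ f z) ∧
            ∀ z ∈ Metric.ball z₀ ε, ‖z‖ < ρ →
              f z = ∑' n, (t n : ℂ) * z ^ n := by
  have hq0 : q ≠ 0 := by omega
  have hsupp : ∀ n, (t n : ℂ) ≠ 0 → ∃ k, n = d + q * k := fun n hn => by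
    rw [hform n] at hn
    split_ifs at hn with h
    · obtain ⟨hdn, k, hk⟩ := h
      exact ⟨k, by omega⟩
    · simp at hn
  have hωq : ω ^ q = 1 := hω ▸ (Complex.isPrimitiveRoot_exp q hq0).pow_eq_one
  refine ⟨fun z _ => Pringsheim.tsum_mul_mul_pow_eq_pow_mul_tsum hsupp hωq z,
    fun z₀ hz₀ hcont => ?_⟩
  have hρ0 : (ρ : ℂ) ≠ 0 := Complex.ofReal_ne_zero.2 hρ.ne'
  set u := z₀ / ρ
  have hu : u ^ q = 1 := by rw [div_pow, hz₀, div_self (pow_ne_zero _ hρ0)]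
  have hu1 : ‖u‖ = 1 := Complex.norm_eq_one_of_pow_eq_one hu hq0
  have hu0 : u ≠ 0 := norm_ne_zero_iff.1 (hu1 ▸ one_ne_zero)
  rw [show z₀ = u * ρ from (div_mul_cancel₀ z₀ hρ0).symm] at hcont
  exact Pringsheim.not_hasAnalyticContinuationAt_radius hnn hρ hconv hdiv
    (Pringsheim.HasAnalyticContinuationAt.of_mul hu1 (pow_ne_zero d hu0)
      (fun z _ => Pringsheim.tsum_mul_mul_pow_eq_pow_mul_tsum hsupp hu z) hcont)

/-- rotational symmetry `T(ωz) = ω^d T(z)` and the fact that all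
`q`-th roots of `ρ^q` on the circle of convergence are singularities of `T`. -/
theorem stmt_3 (t : ℕ → ℝ) (hnn : ∀ n, 0 ≤ t n) (h0 : t 0 = 0)
    (ρ : ℝ) (hρ : 0 < ρ)
    (hconv : ∀ r : ℝ, 0 ≤ r → r < ρ → Summable fun n => t n * r ^ n)
    (hdiv : ∀ r : ℝ, ρ < r → ¬ Summable fun n => t n * r ^ n)
    (d q : ℕ) (hq : 1 ≤ q) (v : ℕ → ℝ) (hv0 : v 0 ≠ 0)
    (hgcd : ∀ m : ℕ, (∀ n, v n ≠ 0 → m ∣ n) → m = 1)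
    (hform : ∀ n, t n = if d ≤ n ∧ q ∣ (n - d) then v ((n - d) / q) else 0)
    (ω : ℂ) (hω : ω = Complex.exp (2 * Real.pi * Complex.I / q)) :
    (∀ z : ℂ, ‖z‖ < ρ →
        ∑' n, (t n : ℂ) * (ω * z) ^ n = ω ^ d * ∑' n, (t n : ℂ) * z ^ n) ∧
      ∀ z₀ : ℂ, z₀ ^ q = (ρ : ℂ) ^ q →
        ¬ ∃ (f : ℂ → ℂ) (ε : ℝ), 0 < ε ∧
            (∀ z ∈ Metric.ball z₀ ε, AnalyticAt ℂ f z) ∧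
            ∀ z ∈ Metric.ball z₀ ε, ‖z‖ < ρ →
              f z = ∑' n, (t n : ℂ) * z ^ n :=
  stmt_3_general t hnn ρ hρ hconv hdiv d q hq v hform ω hω
end

section
/- Define A_R(z) := ∑_{n≥1} R^n z^n for R > 0. Then for all R₁, R₂ > 0: (i) the coefficientwise product satisfies A_{R₁}·A_{R₂} ⊴ A_{R₁+R₂} (each coefficient of the product is at most the corresponding coefficient of A_{R₁+R₂}); and (ii) the formal composition satisfies A_{R₁} ∘ A_{R₂} ⊴ A_{2(1+R₁+R₂)²}. -/
/-- The series `A_R(z) = ∑_{n ≥ 1} R^n z^n`. -/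
noncomputable def Aser (R : ℝ) : PowerSeries ℝ :=
  PowerSeries.mk fun n => if n = 0 then 0 else R ^ n

/-!
Both bounds follow from `coeff n A_R ≤ R ^ n`. For the product, the binomial theorem dominates
`∑_{k+l=n} R₁^k R₂^l` by `(R₁ + R₂)^n`. For the composition, an `i`-fold product of a series
without constant term whose coefficients are bounded by `R^n` has `n`-th coefficient at most
`(2R)^n`, and `∑_{i=1}^n R₁^i ≤ (1 + R₁)^n`; then `2 (1 + R₁) R₂ ≤ 2 (1 + R₁ + R₂)^2`.
-/

open Finset PowerSeries

section OrderedSemiring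

variable {S : Type*} [CommSemiring S] [PartialOrder S] [IsOrderedRing S]

theorem sum_Icc_pow_le_one_add_pow {a : S} (ha : 0 ≤ a) (n : ℕ) :
    ∑ i ∈ Icc 1 n, a ^ i ≤ (1 + a) ^ n := by
  rw [add_comm, add_pow]
  calc ∑ i ∈ Icc 1 n, a ^ i ≤ ∑ i ∈ range (n + 1), a ^ i :=
        sum_le_sum_of_subset_of_nonneg
          (fun i hi => by simp only [mem_Icc, mem_range] at hi ⊢; omega)
          fun i _ _ => pow_nonneg ha i
    _ ≤ ∑ i ∈ range (n + 1), a ^ i * 1 ^ (n - i) * n.choose i := sum_le_sum fun i hi => by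
        rw [one_pow, mul_one]
        refine le_mul_of_one_le_right (pow_nonneg ha i) ?_
        exact_mod_cast Nat.mono_cast (Nat.choose_pos (Nat.lt_succ_iff.mp (mem_range.mp hi)))

namespace PowerSeries

theorem coeff_mul_le_add_pow {f g : S⟦X⟧} {a b : S} (ha : 0 ≤ a) (hb : 0 ≤ b)
    (hg_nonneg : ∀ n, 0 ≤ coeff n g) (hf : ∀ n, coeff n f ≤ a ^ n) (hg : ∀ n, coeff n g ≤ b ^ n)
    (n : ℕ) : coeff n (f * g) ≤ (a + b) ^ n := by
  rw [coeff_mul, (Commute.all a b).add_pow']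
  refine sum_le_sum fun p hp => ?_
  calc coeff p.1 f * coeff p.2 g ≤ a ^ p.1 * b ^ p.2 :=
        mul_le_mul (hf _) (hg _) (hg_nonneg _) (pow_nonneg ha _)
    _ ≤ n.choose p.1 • (a ^ p.1 * b ^ p.2) :=
        le_smul_of_one_le_left (by positivity)
          (Nat.choose_pos (HasAntidiagonal.antidiagonal.fst_le hp))

/-- Without a constant term, `f ^ i` has its `n`-th coefficient spread over at most `2 ^ n`
compositions of `n`. -/
theorem coeff_pow_le_two_mul_pow {f : S⟦X⟧} {b : S} (hb : 0 ≤ b) (hf_const : constantCoeff f = 0)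
    (hf_nonneg : ∀ n, 0 ≤ coeff n f) (hf : ∀ n, coeff n f ≤ b ^ n) {i : ℕ} (hi : 1 ≤ i) (n : ℕ) :
    coeff n (f ^ i) ≤ (2 * b) ^ n := by
  induction i, hi using Nat.le_induction generalizing n with
  | base =>
    rw [pow_one]
    exact (hf n).trans (pow_le_pow_left₀ hb (le_mul_of_one_le_left hb one_le_two) n)
  | succ i _ ih =>
    rw [pow_succ, coeff_mul, Nat.sum_antidiagonal_eq_sum_range_succ_mk, sum_range_succ,
      Nat.sub_self, coeff_zero_eq_constantCoeff_apply, hf_const, mul_zero, add_zero]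
    have hgeom : ∑ k ∈ range n, (2 : S) ^ k ≤ 2 ^ n := by
      exact_mod_cast Nat.mono_cast (Nat.geomSum_lt (m := 2) le_rfl fun k hk => mem_range.mp hk).le
    calc ∑ k ∈ range n, coeff k (f ^ i) * coeff (n - k) f
        ≤ ∑ k ∈ range n, 2 ^ k * b ^ n := sum_le_sum fun k hk => by
          rw [← pow_mul_pow_sub b (mem_range.mp hk).le, ← mul_assoc, ← mul_pow]
          exact mul_le_mul (ih k) (hf _) (hf_nonneg _) (pow_nonneg (mul_nonneg zero_le_two hb) k)
      _ ≤ (2 * b) ^ n := by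
        rw [← sum_mul, mul_pow]
        exact mul_le_mul_of_nonneg_right hgeom (pow_nonneg hb n)

end PowerSeries

end OrderedSemiring

section Aser

variable {R : ℝ}

@[simp]
theorem coeff_Aser (R : ℝ) (n : ℕ) : coeff n (Aser R) = if n = 0 then 0 else R ^ n :=
  coeff_mk _ _

theorem constantCoeff_Aser (R : ℝ) : constantCoeff (Aser R) = 0 := by
  simp [← coeff_zero_eq_constantCoeff_apply]

theorem coeff_Aser_nonneg (hR : 0 ≤ R) (n : ℕ) : 0 ≤ coeff n (Aser R) := by
  rw [coeff_Aser]
  split_ifs <;> positivity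

theorem coeff_Aser_le (hR : 0 ≤ R) (n : ℕ) : coeff n (Aser R) ≤ R ^ n := by
  rw [coeff_Aser]
  split_ifs <;> [positivity; exact le_rfl]

end Aser

/-- coefficientwise bounds for products and compositions of the `A_R`. -/
theorem stmt_6 (R₁ R₂ : ℝ) (h₁ : 0 < R₁) (h₂ : 0 < R₂) :
    (∀ n, PowerSeries.coeff (R := ℝ) n (Aser R₁ * Aser R₂) ≤
        PowerSeries.coeff (R := ℝ) n (Aser (R₁ + R₂))) ∧
      ∀ n, (∑ i ∈ Finset.Icc 1 n, R₁ ^ i * PowerSeries.coeff (R := ℝ) n (Aser R₂ ^ i)) ≤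
        PowerSeries.coeff (R := ℝ) n (Aser (2 * (1 + R₁ + R₂) ^ 2)) := by
  refine ⟨fun n => ?_, fun n => ?_⟩ <;> rcases n with _ | n
  · simp [coeff_zero_eq_constantCoeff_apply, constantCoeff_Aser]
  · rw [coeff_Aser, if_neg n.succ_ne_zero]
    exact coeff_mul_le_add_pow h₁.le h₂.le (coeff_Aser_nonneg h₂.le) (coeff_Aser_le h₁.le)
      (coeff_Aser_le h₂.le) _
  · simp
  · rw [coeff_Aser, if_neg n.succ_ne_zero]
    calc ∑ i ∈ Icc 1 (n + 1), R₁ ^ i * coeff (n + 1) (Aser R₂ ^ i)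
        ≤ ∑ i ∈ Icc 1 (n + 1), R₁ ^ i * (2 * R₂) ^ (n + 1) := sum_le_sum fun i hi =>
          mul_le_mul_of_nonneg_left (coeff_pow_le_two_mul_pow h₂.le (constantCoeff_Aser R₂)
            (coeff_Aser_nonneg h₂.le) (coeff_Aser_le h₂.le) (mem_Icc.mp hi).1 _)
            (pow_nonneg h₁.le i)
      _ ≤ (1 + R₁) ^ (n + 1) * (2 * R₂) ^ (n + 1) := by
        rw [← sum_mul]
        exact mul_le_mul_of_nonneg_right (sum_Icc_pow_le_one_add_pow h₁.le _) (by positivity)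
      _ ≤ (2 * (1 + R₁ + R₂) ^ 2) ^ (n + 1) := by
        rw [← mul_pow]
        exact pow_le_pow_left₀ (by positivity) (by nlinarith) _
end

section
/- Let Θ be a retro operator on DOM[z] such that Θ(S) ⊴ A_R(z + S) for all S ∈ DOM[z], where A_R(z) = ∑_{n≥1} R^n z^n. Then in fact Θ(S) ⊴ A_R(z + S) − R·S for all S ∈ DOM[z], i.e., the n-th coefficient of Θ(S) is at most the n-th coefficient of ∑_{m≥2} R^m(z+S)^m + Rz. -/
/-!
Changing `S` at the single index `n` alters the `n`-th coefficient of `(z + S)^m` only for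
`m = 1`, since for `m ≥ 2` that coefficient involves `s_1, …, s_{n-1}` alone. Hence
`[z^n] A_R(z + S) - R s_n` does not depend on `s_n`. Applying the hypothesis to `S` with `s_n`
replaced by `0`, which a retro operator cannot distinguish from `S` at index `n`, gives the bound.
-/

def DomSeq (a : ℕ → ℝ) : Prop := a 0 = 0 ∧ ∀ n, 0 ≤ a n

def Retro (Θ : (ℕ → ℝ) → ℕ → ℝ) : Prop :=
  ∀ a b : ℕ → ℝ, DomSeq a → DomSeq b → ∀ n : ℕ,
    (∀ m, 1 ≤ m → m < n → a m = b m) → Θ a n = Θ b n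

/-- The `n`-th coefficient of `A_R(z + S) = ∑_{m ≥ 1} R^m (z + S(z))^m`.
Since `z + S(z)` has zero constant term, only the terms `1 ≤ m ≤ n` contribute. -/
noncomputable def ARcoeff (R : ℝ) (S : ℕ → ℝ) (n : ℕ) : ℝ :=
  ∑ m ∈ Finset.Icc 1 n,
    R ^ m * PowerSeries.coeff (R := ℝ) n ((PowerSeries.X + PowerSeries.mk S) ^ m)

open PowerSeries

theorem mul_dvd_pow_sub_pow_of_dvd {R : Type*} [CommRing R] {a b x y : R} {m : ℕ}
    (hx : a ∣ x) (hy : a ∣ y) (hxy : b ∣ x - y) (hm : 2 ≤ m) : a * b ∣ x ^ m - y ^ m := by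
  -- each term `x ^ i * y ^ (m - 1 - i)` of the geometric sum has total degree `m - 1 ≥ 1`
  rw [← geom_sum₂_mul]
  refine mul_dvd_mul (Finset.dvd_sum fun i _ => ?_) hxy
  rcases Nat.eq_zero_or_pos i with rfl | hi
  · exact (dvd_pow hy (by omega)).mul_left _
  · exact (dvd_pow hx hi.ne').mul_right _

theorem PowerSeries.coeff_pow_eq_of_coeff_eq_of_lt {R : Type*} [CommRing R] {f g : R⟦X⟧}
    {n m : ℕ} (hf : constantCoeff f = 0) (hg : constantCoeff g = 0)
    (h : ∀ k < n, coeff k f = coeff k g) (hm : 2 ≤ m) :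
    coeff n (f ^ m) = coeff n (g ^ m) := by
  have hdvd : X ^ (n + 1) ∣ f ^ m - g ^ m := by
    rw [pow_succ']
    exact mul_dvd_pow_sub_pow_of_dvd (X_dvd_iff.2 hf) (X_dvd_iff.2 hg)
      (X_pow_dvd_iff.2 fun k hk => by rw [map_sub, h k hk, sub_self]) hm
  rw [← sub_eq_zero, ← map_sub]
  exact X_pow_dvd_iff.1 hdvd n n.lt_succ_self

theorem ARcoeff_eq_add_sum {R : ℝ} {S : ℕ → ℝ} {n : ℕ} (hn : 1 ≤ n) :
    ARcoeff R S n = R * (coeff n X + S n) +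
      ∑ m ∈ Finset.Icc 2 n, R ^ m * coeff n ((X + mk S) ^ m) := by
  rw [ARcoeff, ← Finset.insert_Icc_add_one_left_eq_Icc hn, Finset.sum_insert (by simp)]
  simp

theorem ARcoeff_sub_eq_of_eq_of_lt (R : ℝ) {S T : ℕ → ℝ} {n : ℕ} (hS : S 0 = 0) (hT : T 0 = 0)
    (h : ∀ k < n, S k = T k) :
    ARcoeff R S n - R * S n = ARcoeff R T n - R * T n := by
  rcases Nat.eq_zero_or_pos n with rfl | hn
  · simp [ARcoeff, hS, hT]
  have hpow : ∀ m ∈ Finset.Icc 2 n,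
      R ^ m * coeff n ((X + mk S) ^ m) = R ^ m * coeff n ((X + mk T) ^ m) := by
    intro m hm
    congr 1
    refine coeff_pow_eq_of_coeff_eq_of_lt (by simp [hS]) (by simp [hT]) (fun k hk => ?_)
      (Finset.mem_Icc.1 hm).1
    simp [h k hk]
  rw [ARcoeff_eq_add_sum hn, ARcoeff_eq_add_sum hn, Finset.sum_congr rfl hpow]
  ring

theorem DomSeq.update_zero {S : ℕ → ℝ} (hS : DomSeq S) (n : ℕ) :
    DomSeq (Function.update S n 0) := by
  refine ⟨?_, fun k => ?_⟩
  · rcases eq_or_ne n 0 with rfl | hn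
    · simp
    · simp [Function.update_of_ne hn.symm, hS.1]
  · rcases eq_or_ne k n with rfl | hk
    · simp
    · simp [Function.update_of_ne hk, hS.2 k]

theorem stmt_9_general (R : ℝ) (Θ : (ℕ → ℝ) → ℕ → ℝ)
    (hretro : Retro Θ)
    (hbd : ∀ S, DomSeq S → ∀ n, Θ S n ≤ ARcoeff R S n) :
    ∀ S, DomSeq S → ∀ n, Θ S n ≤ ARcoeff R S n - R * S n := by
  intro S hS n
  set T := Function.update S n 0
  have hT : DomSeq T := hS.update_zero n
  have hagree : ∀ k < n, S k = T k := fun k hk => (Function.update_of_ne hk.ne _ _).symm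
  calc Θ S n = Θ T n := hretro S T hS hT n fun k _ hk => hagree k hk
    _ ≤ ARcoeff R T n - R * T n := by simpa [T] using hbd T hT n
    _ = ARcoeff R S n - R * S n := (ARcoeff_sub_eq_of_eq_of_lt R hS.1 hT.1 hagree).symm

/-- a retro operator bounded by `A_R(z+S)` is in fact bounded by
`A_R(z+S) - R·S`. -/
theorem stmt_9 (R : ℝ) (hR : 0 < R) (Θ : (ℕ → ℝ) → ℕ → ℝ)
    (hmap : ∀ a, DomSeq a → DomSeq (Θ a)) (hretro : Retro Θ)
    (hbd : ∀ S, DomSeq S → ∀ n, Θ S n ≤ ARcoeff R S n) :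
    ∀ S, DomSeq S → ∀ n, Θ S n ≤ ARcoeff R S n - R * S n :=
  stmt_9_general R Θ hretro hbd
end

section
/- Every bounded retro operator Θ on DOM[z] has a unique fixpoint T, and T has strictly positive radius of convergence. -/
/-!
Since `Θ` is retro, its `n`-th coefficient only sees the truncation of its argument below `n`, so
`T n := Θ (T truncated below n) n` is forced: this recursion defines the unique fixpoint.

For the radius, boundedness applied to these truncations gives
`T n ≤ R [n = 1] + ∑_{2 ≤ m ≤ n} R^m [z^n] (z + T)^m`, with no term `R * T n` on the right. At a
radius `r` with `2R(1 + 2R)² r ≤ 1`, the partial sums `S N = ∑_{n < N} T n r^n` then satisfy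
`S (N + 1) ≤ R r + ∑_{m ≥ 2} (R (r + S N))^m`, and by induction `S N ≤ 2 R r` for all `N`.
-/

open PowerSeries Finset

section NonnegCoeff

variable {f g : PowerSeries ℝ}

lemma coeff_pow_nonneg (hf : ∀ k, 0 ≤ coeff k f) (m n : ℕ) : 0 ≤ coeff n (f ^ m) := by
  induction m generalizing n with
  | zero => rw [pow_zero, coeff_one]; split_ifs <;> norm_num
  | succ m ih =>
    rw [pow_succ, coeff_mul]
    exact sum_nonneg fun p _ => mul_nonneg (ih p.1) (hf p.2)

lemma coeff_pow_le_coeff_pow (hf : ∀ k, 0 ≤ coeff k f) (hfg : ∀ k, coeff k f ≤ coeff k g)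
    (m n : ℕ) : coeff n (f ^ m) ≤ coeff n (g ^ m) := by
  induction m generalizing n with
  | zero => rfl
  | succ m ih =>
    rw [pow_succ, pow_succ, coeff_mul, coeff_mul]
    exact sum_le_sum fun p _ =>
      mul_le_mul (ih p.1) (hfg p.2) (hf p.2) ((coeff_pow_nonneg hf m p.1).trans (ih p.1))

lemma sum_range_coeff_mul_le {r : ℝ} (hf : ∀ k, 0 ≤ coeff k f) (hg : ∀ k, 0 ≤ coeff k g)
    (hr : 0 ≤ r) {N A B : ℕ}
    (hsupp : ∀ i j, i + j < N → coeff i f * coeff j g ≠ 0 → i < A ∧ j < B) :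
    ∑ n ∈ range N, coeff n (f * g) * r ^ n ≤
      (∑ i ∈ range A, coeff i f * r ^ i) * ∑ j ∈ range B, coeff j g * r ^ j := by
  have hdisj : (range N : Set ℕ).PairwiseDisjoint antidiagonal := fun x _ y _ hxy =>
    disjoint_left.2 fun p hx hy => hxy ((mem_antidiagonal.1 hx).symm.trans (mem_antidiagonal.1 hy))
  calc ∑ n ∈ range N, coeff n (f * g) * r ^ n
      = ∑ p ∈ (range N).biUnion antidiagonal, coeff p.1 f * r ^ p.1 * (coeff p.2 g * r ^ p.2) := by
        rw [sum_biUnion hdisj]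
        refine sum_congr rfl fun n _ => ?_
        rw [coeff_mul, sum_mul]
        refine sum_congr rfl fun p hp => ?_
        rw [← mem_antidiagonal.1 hp, pow_add]
        ring
    _ = ∑ p ∈ (range N).biUnion antidiagonal
          with coeff p.1 f * r ^ p.1 * (coeff p.2 g * r ^ p.2) ≠ 0,
          coeff p.1 f * r ^ p.1 * (coeff p.2 g * r ^ p.2) := (sum_filter_ne_zero _).symm
    _ ≤ ∑ p ∈ range A ×ˢ range B, coeff p.1 f * r ^ p.1 * (coeff p.2 g * r ^ p.2) := by
        refine sum_le_sum_of_subset_of_nonneg (fun p hp => ?_) fun p _ _ =>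
          mul_nonneg (mul_nonneg (hf _) (pow_nonneg hr _)) (mul_nonneg (hg _) (pow_nonneg hr _))
        simp only [mem_filter, mem_biUnion, mem_range, HasAntidiagonal.mem_antidiagonal] at hp
        obtain ⟨⟨n, hn, rfl⟩, hne⟩ := hp
        have := hsupp p.1 p.2 hn fun h => hne (by linear_combination r ^ p.1 * r ^ p.2 * h)
        simpa only [mem_product, mem_range]
    _ = _ := by rw [sum_mul_sum, sum_product]

lemma sum_range_coeff_pow_le {r : ℝ} (hf : ∀ k, 0 ≤ coeff k f) (hr : 0 ≤ r) (N m : ℕ) :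
    ∑ n ∈ range N, coeff n (f ^ m) * r ^ n ≤ (∑ i ∈ range N, coeff i f * r ^ i) ^ m := by
  induction m with
  | zero =>
    cases N with
    | zero => simp
    | succ N => simp [sum_range_succ', coeff_one]
  | succ m ih =>
    rw [pow_succ, pow_succ]
    refine (sum_range_coeff_mul_le (A := N) (B := N) (coeff_pow_nonneg hf m) hf hr
      fun i j hij _ => ?_).trans ?_
    · omega
    · exact mul_le_mul_of_nonneg_right ih
        (sum_nonneg fun i _ => mul_nonneg (hf i) (pow_nonneg hr i))

/-- With zero constant term, the coefficients of index `≤ N` of a product of at least two factors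
involve only coefficients of index `< N` of each factor. -/
lemma sum_range_succ_coeff_pow_le {r : ℝ} (hf0 : constantCoeff f = 0) (hf : ∀ k, 0 ≤ coeff k f)
    (hr : 0 ≤ r) (N : ℕ) {m : ℕ} (hm : 2 ≤ m) :
    ∑ n ∈ range (N + 1), coeff n (f ^ m) * r ^ n ≤ (∑ i ∈ range N, coeff i f * r ^ i) ^ m := by
  obtain ⟨m, rfl⟩ := Nat.exists_eq_add_of_le' hm
  have hsupp : ∀ i j, i + j < N + 1 → coeff i f * coeff j (f ^ (m + 1)) ≠ 0 → i < N ∧ j < N := by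
    intro i j hij hne
    have hi : i ≠ 0 := by rintro rfl; simp [hf0] at hne
    have hj : j ≠ 0 := by rintro rfl; simp [hf0] at hne
    omega
  rw [pow_succ', pow_succ' _ (m + 1)]
  refine (sum_range_coeff_mul_le hf (coeff_pow_nonneg hf _) hr hsupp).trans ?_
  exact mul_le_mul_of_nonneg_left (sum_range_coeff_pow_le hf hr N _)
    (sum_nonneg fun i _ => mul_nonneg (hf i) (pow_nonneg hr i))

end NonnegCoeff

lemma sum_Icc_two_pow_le {x : ℝ} (hx : 0 ≤ x) (hx2 : x ≤ 1 / 2) (N : ℕ) :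
    ∑ m ∈ Icc 2 N, x ^ m ≤ 2 * x ^ 2 := by
  calc ∑ m ∈ Icc 2 N, x ^ m
      = ∑ m ∈ Ico 2 (N + 1), x ^ m := by rw [Ico_add_one_right_eq_Icc]
    _ ≤ x ^ 2 / (1 - x) := geom_sum_Ico_le_of_lt_one hx (by linarith)
    _ ≤ 2 * x ^ 2 := by
        rw [div_le_iff₀ (by linarith)]
        nlinarith [sq_nonneg x]

lemma sum_range_ite_mul_pow_le {c r : ℝ} (hcr : 0 ≤ c * r) (M : ℕ) :
    ∑ n ∈ range M, (if n = 1 then c else 0) * r ^ n ≤ c * r := by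
  simp only [ite_mul, zero_mul, sum_ite_eq', mem_range]
  split_ifs <;> simp [hcr]

/-- `ARcoeff R T n` without its term `R * T n`: it depends only on the `T k` with `k < n`. -/
noncomputable def ARmajorant (R : ℝ) (T : ℕ → ℝ) (n : ℕ) : ℝ :=
  (if n = 1 then R else 0) + ∑ m ∈ Icc 2 n, R ^ m * coeff n ((X + PowerSeries.mk T) ^ m)

section Majorant

variable {T : ℕ → ℝ} {R r : ℝ}

lemma sum_range_le_of_le_majorant (hT : DomSeq T) (hR : 0 ≤ R) (hr : 0 ≤ r)
    (hrR : 2 * R * (1 + 2 * R) ^ 2 * r ≤ 1)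
    (hle : ∀ n, T n ≤ ARmajorant R T n) (N : ℕ) : ∑ n ∈ range N, T n * r ^ n ≤ 2 * R * r := by
  induction N with
  | zero => simp only [range_zero, sum_empty]; positivity
  | succ N ih =>
    set f : PowerSeries ℝ := X + PowerSeries.mk T
    have hfc : ∀ k, coeff k f = (if k = 1 then 1 else 0) + T k := fun k => by
      simp only [f, map_add, coeff_X, coeff_mk]
    have hf : ∀ k, 0 ≤ coeff k f := fun k => by
      rw [hfc]; have := hT.2 k; split_ifs <;> linarith
    have hf0 : constantCoeff f = 0 := by rw [← coeff_zero_eq_constantCoeff_apply, hfc, hT.1]; simp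
    set P := ∑ i ∈ range N, coeff i f * r ^ i
    have hP : 0 ≤ P := sum_nonneg fun i _ => mul_nonneg (hf i) (pow_nonneg hr i)
    have hPle : P ≤ (1 + 2 * R) * r := by
      have : P ≤ 1 * r + ∑ i ∈ range N, T i * r ^ i := by
        simp only [P, hfc, add_mul, sum_add_distrib]
        gcongr
        exact sum_range_ite_mul_pow_le (by simpa using hr) N
      linarith
    have hRP : R * P ≤ 1 / 2 := by
      have : R * P ≤ R * (1 + 2 * R) * r := by nlinarith
      nlinarith [mul_nonneg (mul_nonneg hR (by positivity : (0 : ℝ) ≤ 1 + 2 * R)) hr]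
    calc ∑ n ∈ range (N + 1), T n * r ^ n
        ≤ ∑ n ∈ range (N + 1), ((if n = 1 then R else 0) * r ^ n +
            ∑ m ∈ Icc 2 N, R ^ m * coeff n (f ^ m) * r ^ n) := by
          refine sum_le_sum fun n hn => ?_
          rw [← sum_mul, ← add_mul]
          refine mul_le_mul_of_nonneg_right ((hle n).trans (add_le_add_right ?_ _))
            (pow_nonneg hr n)
          refine sum_le_sum_of_subset_of_nonneg (Icc_subset_Icc_right ?_) fun m _ _ => ?_
          · simpa [Nat.lt_succ_iff] using hn
          · exact mul_nonneg (pow_nonneg hR m) (coeff_pow_nonneg hf m n)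
      _ = ∑ n ∈ range (N + 1), (if n = 1 then R else 0) * r ^ n +
            ∑ m ∈ Icc 2 N, R ^ m * ∑ n ∈ range (N + 1), coeff n (f ^ m) * r ^ n := by
          simp only [sum_add_distrib, mul_sum, ← mul_assoc]
          rw [sum_comm]
      _ ≤ R * r + ∑ m ∈ Icc 2 N, (R * P) ^ m := by
          gcongr with m hm
          · exact sum_range_ite_mul_pow_le (mul_nonneg hR hr) _
          · rw [mul_pow]
            exact mul_le_mul_of_nonneg_left
              (sum_range_succ_coeff_pow_le hf0 hf hr N (mem_Icc.1 hm).1) (pow_nonneg hR m)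
      _ ≤ R * r + 2 * (R * P) ^ 2 := by gcongr; exact sum_Icc_two_pow_le (by positivity) hRP N
      _ ≤ R * r + 2 * (R * ((1 + 2 * R) * r)) ^ 2 := by gcongr
      _ ≤ 2 * R * r := by nlinarith [mul_nonneg hR hr]

lemma exists_summable_of_le_majorant (hT : DomSeq T) (hR : 0 ≤ R)
    (hle : ∀ n, T n ≤ ARmajorant R T n) :
    ∃ r : ℝ, 0 < r ∧ Summable fun n => T n * r ^ n := by
  set c := 2 * R * (1 + 2 * R) ^ 2
  have hc : 0 ≤ c := by positivity
  have hcr : c * (c + 1)⁻¹ ≤ 1 := by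
    rw [← div_eq_mul_inv, div_le_one (by positivity)]; linarith
  refine ⟨(c + 1)⁻¹, by positivity, summable_of_sum_range_le
    (fun n => mul_nonneg (hT.2 n) (by positivity)) (sum_range_le_of_le_majorant hT hR
      (by positivity) hcr hle)⟩

end Majorant

def truncate (a : ℕ → ℝ) (n : ℕ) : ℕ → ℝ := fun k => if k < n then a k else 0

lemma domSeq_truncate {a : ℕ → ℝ} (h0 : a 0 = 0) {n : ℕ} (hnn : ∀ k < n, 0 ≤ a k) :
    DomSeq (truncate a n) :=
  ⟨by simp [truncate, h0], fun k => by
    unfold truncate; split_ifs with hk; exacts [hnn k hk, le_rfl]⟩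

lemma DomSeq.truncate {a : ℕ → ℝ} (ha : DomSeq a) (n : ℕ) : DomSeq (truncate a n) :=
  domSeq_truncate ha.1 fun k _ => ha.2 k

lemma ARcoeff_truncate_le {R : ℝ} (hR : 0 ≤ R) {T : ℕ → ℝ} (hT : DomSeq T) (n : ℕ) :
    ARcoeff R (truncate T n) n ≤ ARmajorant R T n := by
  cases n with
  | zero => simp [ARcoeff, ARmajorant]
  | succ n =>
    rw [ARcoeff, ARmajorant, ← insert_Icc_add_one_left_eq_Icc (by omega : 1 ≤ n + 1),
      sum_insert (by simp)]
    have hlin : R ^ 1 * coeff (n + 1) ((X + PowerSeries.mk (truncate T (n + 1))) ^ 1) =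
        if n + 1 = 1 then R else 0 := by
      simp [coeff_X, truncate]
    rw [hlin, one_add_one_eq_two]
    have hnn := hT.truncate (n + 1)
    gcongr with m
    refine coeff_pow_le_coeff_pow (fun k => ?_) (fun k => ?_) m (n + 1)
    · simp only [map_add, coeff_X, coeff_mk]; have := hnn.2 k; split_ifs <;> linarith
    · simp only [map_add, coeff_X, coeff_mk, truncate]; have := hT.2 k; split_ifs <;> linarith

-- The dependent `if` gives well-founded recursion the hypothesis `k < n`.
noncomputable def retroFix (Θ : (ℕ → ℝ) → ℕ → ℝ) (n : ℕ) : ℝ :=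
  Θ (fun k => if _ : k < n then retroFix Θ k else 0) n

lemma retroFix_eq (Θ : (ℕ → ℝ) → ℕ → ℝ) (n : ℕ) :
    retroFix Θ n = Θ (truncate (retroFix Θ) n) n := by
  rw [retroFix]
  simp only [dite_eq_ite]
  rfl

section Fixpoint

variable {Θ : (ℕ → ℝ) → ℕ → ℝ}

lemma retroFix_zero (hmap : ∀ a, DomSeq a → DomSeq (Θ a)) : retroFix Θ 0 = 0 := by
  rw [retroFix_eq]
  exact (hmap _ ⟨by simp [truncate], fun k => by simp [truncate]⟩).1

lemma domSeq_retroFix (hmap : ∀ a, DomSeq a → DomSeq (Θ a)) : DomSeq (retroFix Θ) := by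
  refine ⟨retroFix_zero hmap, fun n => ?_⟩
  induction n using Nat.strong_induction_on with
  | _ n ih =>
    rw [retroFix_eq]
    exact (hmap _ (domSeq_truncate (retroFix_zero hmap) ih)).2 n

namespace Retro

lemma apply_truncate (hΘ : Retro Θ) {a : ℕ → ℝ} (ha : DomSeq a) (n : ℕ) :
    Θ (truncate a n) n = Θ a n :=
  hΘ _ _ (ha.truncate n) ha n fun _ _ hm => if_pos hm

lemma apply_retroFix (hΘ : Retro Θ) (hT : DomSeq (retroFix Θ)) : Θ (retroFix Θ) = retroFix Θ := by
  funext n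
  rw [← hΘ.apply_truncate hT n, ← retroFix_eq Θ]

lemma eq_retroFix (hΘ : Retro Θ) {S : ℕ → ℝ} (hS : DomSeq S) (hSfix : Θ S = S) :
    S = retroFix Θ := by
  funext n
  induction n using Nat.strong_induction_on with
  | _ n ih =>
    have htrunc : truncate S n = truncate (retroFix Θ) n := by
      funext k
      unfold truncate
      split_ifs with hk
      exacts [ih k hk, rfl]
    rw [← hSfix, ← hΘ.apply_truncate hS, htrunc, ← retroFix_eq Θ]

end Retro

end Fixpoint

/-- every bounded retro operator has a unique fixpoint, which has a
strictly positive radius of convergence. -/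
theorem stmt_11 (Θ : (ℕ → ℝ) → ℕ → ℝ)
    (hmap : ∀ a, DomSeq a → DomSeq (Θ a)) (hretro : Retro Θ)
    (hbdd : ∃ R : ℝ, 0 < R ∧ ∀ S, DomSeq S → ∀ n, Θ S n ≤ ARcoeff R S n) :
    ∃ T : ℕ → ℝ, DomSeq T ∧ Θ T = T ∧
      (∀ S, DomSeq S → Θ S = S → S = T) ∧
      ∃ r : ℝ, 0 < r ∧ Summable fun n => T n * r ^ n := by
  obtain ⟨R, hR, hbdd⟩ := hbdd
  have hT := domSeq_retroFix hmap
  refine ⟨retroFix Θ, hT, hretro.apply_retroFix hT, fun S hS hSfix => hretro.eq_retroFix hS hSfix,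
    exists_summable_of_le_majorant hT hR.le fun n => ?_⟩
  calc retroFix Θ n = Θ (truncate (retroFix Θ) n) n := retroFix_eq Θ n
    _ ≤ ARcoeff R (truncate (retroFix Θ) n) n := hbdd _ (hT.truncate n) n
    _ ≤ _ := ARcoeff_truncate_le hR.le hT n
end

section
/- Let E(z,w) = ∑_{ij} e_{ij} z^i w^j have nonnegative coefficients with e_{00} = 0. The associated operator T ↦ E(z,T) on DOM[z] is retro if and only if e_{01} = 0. -/
/-- The elementary operator `T ↦ E(z,T)` at the level of coefficients: since `T`
has zero constant term, only the terms with `j ≤ n` contribute to `[z^n] E(z,T)`. -/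
noncomputable def elemOp (e : ℕ → ℕ → ℝ) (t : ℕ → ℝ) (n : ℕ) : ℝ :=
  ∑ j ∈ Finset.range (n + 1),
    PowerSeries.coeff (R := ℝ) n (PowerSeries.mk (fun i => e i j) * PowerSeries.mk t ^ j)

/-!
Write `T = X * S`. For `j ≥ 2` the term `E_j(z) T^j` is `X^2 * (E_j X^(j-2) S^j)`, and for `j = 1`
it is `X^2 * (E_1' S)` exactly when `X ∣ E_1`, i.e. `e_{01} = 0`. The coefficient of `z^n` in
`X^2 * P` only sees the coefficients of `S` below `n - 1`, namely `t_1, …, t_{n-1}`. Conversely,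
`T = X` and `T = 0` agree below degree `1`, but their images differ at `z^1` by `e_{01}`.
-/

open PowerSeries

section Truncation

variable {R : Type*} [CommSemiring R]

theorem PowerSeries.trunc_mul_pow_eq_of_trunc_eq {k : ℕ} {f g : R⟦X⟧} (hfg : trunc k f = trunc k g)
    (c : R⟦X⟧) (j : ℕ) : trunc k (c * f ^ j) = trunc k (c * g ^ j) := by
  rw [← trunc_mul_trunc, ← trunc_trunc_pow, hfg, trunc_trunc_pow, trunc_mul_trunc]

theorem PowerSeries.coeff_X_sq_mul_eq_of_trunc_eq {n : ℕ} {p q : R⟦X⟧}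
    (hpq : trunc (n - 1) p = trunc (n - 1) q) : coeff n (X ^ 2 * p) = coeff n (X ^ 2 * q) := by
  rw [coeff_X_pow_mul', coeff_X_pow_mul']
  split_ifs with hn
  · rw [← coeff_coe_trunc_of_lt (by omega : n - 2 < n - 1), hpq, coeff_coe_trunc_of_lt (by omega)]
  · rfl

theorem PowerSeries.coeff_mul_X_mul_pow_eq_of_trunc_eq {n j : ℕ} {c f g : R⟦X⟧} (hj : j ≠ 0)
    (hc : j = 1 → constantCoeff c = 0) (hfg : trunc (n - 1) f = trunc (n - 1) g) :
    coeff n (c * (X * f) ^ j) = coeff n (c * (X * g) ^ j) := by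
  obtain ⟨d, hd⟩ : ∃ d : R⟦X⟧, ∀ p : R⟦X⟧, c * (X * p) ^ j = X ^ 2 * (d * p ^ j) := by
    rcases j with _ | _ | k
    · exact absurd rfl hj
    · obtain ⟨d, rfl⟩ := X_dvd_iff.mpr (hc rfl)
      exact ⟨d, fun p => by ring⟩
    · exact ⟨X ^ k * c, fun p => by ring⟩
  rw [hd, hd]
  exact coeff_X_sq_mul_eq_of_trunc_eq (trunc_mul_pow_eq_of_trunc_eq hfg d j)

end Truncation

theorem PowerSeries.mk_eq_X_mul_mk_succ {R : Type*} [Semiring R] {a : ℕ → R} (ha : a 0 = 0) :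
    mk a = X * mk fun m => a (m + 1) := by
  ext (_ | m) <;> simp [ha, coeff_succ_X_mul]

theorem elemOp_zero_one (e : ℕ → ℕ → ℝ) : elemOp e 0 1 = e 1 0 := by
  have h0 : mk (0 : ℕ → ℝ) = 0 := by ext; simp
  simp [elemOp, Finset.sum_range_succ, h0]

theorem elemOp_X_one (e : ℕ → ℕ → ℝ) : elemOp e (fun m => coeff m X) 1 = e 1 0 + e 0 1 := by
  have hX : (mk fun m => coeff m (X : ℝ⟦X⟧)) = X := by ext; simp
  simp [elemOp, Finset.sum_range_succ, hX, coeff_succ_mul_X]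

theorem eq_zero_of_retro_elemOp {e : ℕ → ℕ → ℝ} (h : Retro (elemOp e)) : e 0 1 = 0 := by
  have hX : DomSeq fun m => coeff m (X : ℝ⟦X⟧) :=
    ⟨by simp, fun n => by simp only [coeff_X]; split_ifs <;> norm_num⟩
  have hzero : DomSeq 0 := ⟨rfl, fun _ => le_rfl⟩
  have := h _ 0 hX hzero 1 (fun m hm hm1 => by omega)
  rw [elemOp_X_one, elemOp_zero_one] at this
  linarith

theorem retro_elemOp {e : ℕ → ℕ → ℝ} (h01 : e 0 1 = 0) : Retro (elemOp e) := by
  intro a b ha hb n hab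
  have hshift : trunc (n - 1) (mk fun m => a (m + 1)) = trunc (n - 1) (mk fun m => b (m + 1)) := by
    ext m
    simp only [coeff_trunc, coeff_mk]
    split_ifs with hm
    · exact hab (m + 1) (by omega) (by omega)
    · rfl
  refine Finset.sum_congr rfl fun j _ => ?_
  rcases eq_or_ne j 0 with rfl | hj
  · simp
  rw [mk_eq_X_mul_mk_succ ha.1, mk_eq_X_mul_mk_succ hb.1]
  exact coeff_mul_X_mul_pow_eq_of_trunc_eq hj (fun hj1 => by simp [hj1, h01]) hshift

theorem stmt_18_general (e : ℕ → ℕ → ℝ) :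
    Retro (elemOp e) ↔ e 0 1 = 0 :=
  ⟨eq_zero_of_retro_elemOp, retro_elemOp⟩

/-- the elementary operator associated with `E` is retro iff
`e_{01} = 0`. -/
theorem stmt_18 (e : ℕ → ℕ → ℝ) (hnn : ∀ i j, 0 ≤ e i j) (h00 : e 0 0 = 0) :
    Retro (elemOp e) ↔ e 0 1 = 0 :=
  stmt_18_general e
end
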